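/- arXiv:1711.04958 — 9 statements merged into one kernel-verified Lean document; each statement's English description precedes it below -/
import Mathlib

section
/- Let φ : R → S be a flat ring homomorphism of commutative rings with S Noetherian, let M be an R-module, and let p be an associated prime of M over R. Then either the extension of p to S is all of S (i.e. pS = S), or there exists an associated prime q of the S-module M ⊗_R S such that φ⁻¹(q) = p. -/
open TensorProduct

/-!
Write `p = √I` with `I = ann(x)`, so that `R ⧸ I ↪ M` and, by flatness,
`S ⧸ IS ≅ S ⊗ R ⧸ I ↪ S ⊗ M`. If `pS ≠ S`, let `Q` be a minimal prime over `pS`. Since `pS` and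
`IS` have the same radical, `Q` is minimal over `IS`, hence associated to `S ⧸ IS` (as `S` is
Noetherian). Finally `Q ∩ R = p`: otherwise going down, which holds for flat maps, gives a prime
`P ⊊ Q` lying over `p`, and `P ⊇ pS` contradicts the minimality of `Q`.
-/

namespace Ideal

variable {R S : Type*} [CommRing R] [CommRing S]

theorem radical_map_radical (f : R →+* S) (I : Ideal R) :
    (I.radical.map f).radical = (I.map f).radical :=
  le_antisymm (radical_le_radical_iff.mpr (map_radical_le f)) (radical_mono (map_mono le_radical))

theorem minimalPrimes_map_radical (f : R →+* S) (I : Ideal R) :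
    (I.radical.map f).minimalPrimes = (I.map f).minimalPrimes := by
  rw [← radical_minimalPrimes, radical_map_radical, radical_minimalPrimes]

theorem comap_eq_of_mem_minimalPrimes_map [Algebra R S] [Algebra.HasGoingDown R S]
    {p : Ideal R} [p.IsPrime] {Q : Ideal S} (hQ : Q ∈ (p.map (algebraMap R S)).minimalPrimes) :
    Q.comap (algebraMap R S) = p := by
  have : Q.IsPrime := hQ.1.1
  have : Q.LiesOver (Q.comap (algebraMap R S)) := ⟨rfl⟩
  refine ((le_comap_of_map_le hQ.1.2).eq_of_not_lt fun hlt ↦ ?_).symm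
  obtain ⟨P, hPQ, hP, hPp⟩ := exists_ideal_lt_liesOver_of_lt Q hlt
  exact hPQ.not_ge (hQ.2 ⟨hP, map_le_of_le_comap hPp.over.le⟩ hPQ.le)

theorem mem_associatedPrimes_quotient_of_mem_minimalPrimes [IsNoetherianRing S] {I Q : Ideal S}
    (hQ : Q ∈ I.minimalPrimes) : Q ∈ associatedPrimes S (S ⧸ I) :=
  Module.associatedPrimes.minimalPrimes_annihilator_subset_associatedPrimes S (S ⧸ I)
    (by rwa [annihilator_quotient])

end Ideal

theorem Submodule.bot_colon_singleton {R M : Type*} [CommRing R] [AddCommGroup M] [Module R M]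
    (x : M) : (⊥ : Submodule R M).colon {x} = Ideal.torsionOf R M x := by
  rw [bot_colon', Ideal.annihilator_span_singleton_eq_torsionOf]

theorem associatedPrimes_lTensor_subset {R S : Type*} [CommRing R] [CommRing S] [Algebra R S]
    [Module.Flat R S] {N M : Type*} [AddCommGroup N] [Module R N] [AddCommGroup M] [Module R M]
    {f : N →ₗ[R] M} (hf : Function.Injective f) :
    associatedPrimes S (S ⊗[R] N) ⊆ associatedPrimes S (S ⊗[R] M) :=
  associatedPrimes.subset_of_injective (f := f.baseChange S)
    (Module.Flat.lTensor_preserves_injective_linearMap f hf)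

theorem associatedPrimes_quotient_map_torsionOf_subset {R S : Type*} [CommRing R] [CommRing S]
    [Algebra R S] [Module.Flat R S] {M : Type*} [AddCommGroup M] [Module R M] (x : M) :
    associatedPrimes S (S ⧸ (Ideal.torsionOf R M x).map (algebraMap R S)) ⊆
      associatedPrimes S (S ⊗[R] M) := by
  rw [LinearEquiv.AssociatedPrimes.eq
    (Algebra.TensorProduct.quotIdealMapEquivTensorQuot S (Ideal.torsionOf R M x)).toLinearEquiv]
  refine associatedPrimes_lTensor_subset (f := (R ∙ x).subtype ∘ₗ
    (Ideal.quotTorsionOfEquivSpanSingleton R M x).toLinearMap) ?_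
  exact (Submodule.injective_subtype _).comp (LinearEquiv.injective _)

theorem stmt0_general {R S : Type*} [CommRing R] [CommRing S]
    [Algebra R S] [Module.Flat R S] [IsNoetherianRing S]
    (M : Type*) [AddCommGroup M] [Module R M]
    (p : Ideal R) (hp : p ∈ associatedPrimes R M) :
    p.map (algebraMap R S) = ⊤ ∨
      ∃ q ∈ associatedPrimes S (S ⊗[R] M), q.comap (algebraMap R S) = p := by
  refine or_iff_not_imp_left.mpr fun hpS ↦ ?_
  obtain ⟨hp, x, rfl⟩ := hp
  obtain ⟨Q, hQ⟩ := Ideal.nonempty_minimalPrimes hpS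
  refine ⟨Q, ?_, Ideal.comap_eq_of_mem_minimalPrimes_map hQ⟩
  rw [Ideal.minimalPrimes_map_radical, Submodule.bot_colon_singleton] at hQ
  exact associatedPrimes_quotient_map_torsionOf_subset x
    (Ideal.mem_associatedPrimes_quotient_of_mem_minimalPrimes hQ)

/-- Let `φ : R → S` be a flat ring homomorphism (here given by an algebra structure with
flat structure map) with `S` Noetherian, `M` an `R`-module, and `p ∈ Ass_R(M)`. Then either
`pS = S` or there exists `q ∈ Ass_S(M ⊗_R S)` contracting to `p`. -/
theorem stmt0 {R S : Type*} [CommRing R] [CommRing S] [Nontrivial R] [Nontrivial S]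
    [Algebra R S] [Module.Flat R S] [IsNoetherianRing S]
    (M : Type*) [AddCommGroup M] [Module R M]
    (p : Ideal R) (hp : p ∈ associatedPrimes R M) :
    p.map (algebraMap R S) = ⊤ ∨
      ∃ q ∈ associatedPrimes S (S ⊗[R] M), q.comap (algebraMap R S) = p :=
  stmt0_general M p hp
end

section
/- Let φ : R → S be a flat ring homomorphism of nontrivial commutative rings. Then every prime ideal of R that is minimal over ker φ is a minimal prime of R (i.e. the minimal primes of the ideal ker φ have codimension 0). -/
/-- Going down pulls any prime `p' ≤ p` back to a prime of `S`, so `p'` contains the kernel too. -/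
theorem Algebra.HasGoingDown.minimalPrimes_ker_subset {R S : Type*} [CommRing R] [CommRing S]
    [Algebra R S] [Algebra.HasGoingDown R S] :
    (RingHom.ker (algebraMap R S)).minimalPrimes ⊆ minimalPrimes R := by
  intro p hp
  have hpp := hp.isPrime
  obtain ⟨Q, hQ, -, hQp⟩ := Ideal.exists_comap_eq_of_mem_minimalPrimes (algebraMap R S)
    (I := ⊥) p (by rwa [← RingHom.ker_eq_comap_bot])
  have : Q.LiesOver p := ⟨hQp.symm⟩
  refine ⟨⟨hpp, bot_le⟩, fun p' ⟨hp', _⟩ hle => ?_⟩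
  obtain ⟨P, -, -, hPp'⟩ := Ideal.exists_ideal_le_liesOver_of_le Q hle
  have hker : RingHom.ker (algebraMap R S) ≤ p' := by
    rw [hPp'.over]
    exact Ideal.comap_mono bot_le
  exact hp.2 ⟨hp', hker⟩ hle

theorem stmt3_general {R S : Type*} [CommRing R] [CommRing S]
    (φ : R →+* S) (hφ : φ.Flat) (p : Ideal R) (hp : p ∈ (RingHom.ker φ).minimalPrimes) :
    p ∈ minimalPrimes R := by
  algebraize [φ]
  exact Algebra.HasGoingDown.minimalPrimes_ker_subset hp

/-- If `φ : R → S` is a flat ring homomorphism of nontrivial commutative rings, then every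
prime of `R` minimal over `ker φ` is a minimal prime of `R`. -/
theorem stmt3 {R S : Type*} [CommRing R] [CommRing S] [Nontrivial R] [Nontrivial S]
    (φ : R →+* S) (hφ : φ.Flat) (p : Ideal R) (hp : p ∈ (RingHom.ker φ).minimalPrimes) :
    p ∈ minimalPrimes R :=
  stmt3_general φ hφ p hp
end

section
/- Let R be a nontrivial commutative ring. The following are equivalent: (1) for every nontrivial commutative ring S, every flat ring homomorphism R → S is injective; (2) every zerodivisor of R is nilpotent (i.e. the zero ideal of R is primary); (3) R has a unique minimal prime p, and the set of zerodivisors of R equals p. -/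
/-!
A zerodivisor `r` that is not nilpotent kills some `s ≠ 0` and survives in the nontrivial flat
localization `R[1/r]`, where `s` becomes `0`; so (1) forces (2). Conversely, if `φ r = 0` for a flat
`φ` and `r ≠ 0`, the equational criterion writes `1 = ∑ φ(aⱼ) yⱼ` with `r aⱼ = 0`; under (2) every
`aⱼ` is nilpotent, hence so is `1`. Finally (2) says that `0` is a primary ideal, whose radical, the
nilradical, is then its only minimal prime; and a unique minimal prime is the nilradical.
-/

universe u

open Function
open scoped nonZeroDivisors

section ZeroDivisors

variable {M₀ : Type*} [CommMonoidWithZero M₀]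

theorem exists_ne_zero_and_mul_eq_zero_iff {r : M₀} : (∃ s, s ≠ 0 ∧ r * s = 0) ↔ r ∉ M₀⁰ := by
  simp [notMem_nonZeroDivisors_iff_left, Set.Nonempty, and_comm]

theorem IsNilpotent.notMem_nonZeroDivisors [Nontrivial M₀] {r : M₀} (h : IsNilpotent r) :
    r ∉ M₀⁰ := by
  obtain ⟨n, hn⟩ := h
  exact fun hr ↦ zero_notMem_nonZeroDivisors (hn ▸ pow_mem hr n)

end ZeroDivisors

section

variable {R : Type*} [CommRing R]

theorem Ideal.isPrimary_bot_iff [Nontrivial R] :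
    (⊥ : Ideal R).IsPrimary ↔ ∀ r ∉ R⁰, IsNilpotent r := by
  have hrad : ∀ y : R, y ∈ (⊥ : Ideal R).radical ↔ IsNilpotent y := fun y ↦ by
    rw [← Ideal.zero_eq_bot, ← nilradical, mem_nilradical]
  simp only [Ideal.isPrimary_iff, Ideal.mem_bot, hrad, ne_eq, bot_ne_top, not_false_eq_true,
    true_and, ← exists_ne_zero_and_mul_eq_zero_iff]
  exact ⟨fun h r ⟨s, hs, hrs⟩ ↦ (h (mul_comm r s ▸ hrs)).resolve_left hs,
    fun h x y hxy ↦ or_iff_not_imp_left.2 fun hx ↦ h y ⟨x, hx, mul_comm x y ▸ hxy⟩⟩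

theorem eq_nilradical_of_minimalPrimes_eq_singleton {p : Ideal R} (h : minimalPrimes R = {p}) :
    p = nilradical R := by
  simpa [minimalPrimes, h, nilradical, Ideal.zero_eq_bot] using (⊥ : Ideal R).sInf_minimalPrimes

theorem IsLocalization.Away.nontrivial_iff (r : R) (S : Type*) [CommRing S] [Algebra R S]
    [IsLocalization.Away r S] : Nontrivial S ↔ ¬IsNilpotent r := by
  rw [← not_subsingleton_iff_nontrivial, IsLocalization.subsingleton_iff (M := Submonoid.powers r),
    isNilpotent_iff_zero_mem_powers]

theorem IsLocalization.Away.not_injective_algebraMap {r : R} (S : Type*) [CommRing S] [Algebra R S]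
    [IsLocalization.Away r S] (hr : r ∉ R⁰) : ¬Injective (algebraMap R S) := by
  obtain ⟨s, hs, hrs⟩ := exists_ne_zero_and_mul_eq_zero_iff.2 hr
  refine fun hinj ↦ hs (hinj ?_)
  rw [map_zero, IsLocalization.map_eq_zero_iff (Submonoid.powers r)]
  exact ⟨⟨r, Submonoid.mem_powers r⟩, hrs⟩

theorem Module.Flat.exists_eq_sum_smul_of_smul_eq_zero {M : Type*} [AddCommGroup M] [Module R M]
    [Module.Flat R M] {r : R} {x : M} (h : r • x = 0) :
    ∃ (k : ℕ) (a : Fin k → R) (y : Fin k → M), (∀ j, r * a j = 0) ∧ x = ∑ j, a j • y j := by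
  obtain ⟨k, a, y, hx, ha⟩ := Module.Flat.isTrivialRelation_of_sum_smul_eq_zero
    (f := fun _ : Unit ↦ r) (x := fun _ ↦ x) (by simpa using h)
  exact ⟨k, a (), y, fun j ↦ by simpa using ha j, hx ()⟩

theorem RingHom.Flat.injective_of_forall_isNilpotent {S : Type*} [CommRing S] [Nontrivial S]
    {φ : R →+* S} (hφ : φ.Flat) (h : ∀ r ∉ R⁰, IsNilpotent r) : Injective φ := by
  algebraize [φ]
  refine (injective_iff_map_eq_zero φ).2 fun r hr ↦ by_contra fun hr0 ↦ ?_
  obtain ⟨k, a, y, ha, hy⟩ := Module.Flat.exists_eq_sum_smul_of_smul_eq_zero (R := R)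
    (show r • (1 : S) = 0 by simp [Algebra.smul_def, RingHom.algebraMap_toAlgebra, hr])
  have ha_nil (j : Fin k) : IsNilpotent (a j) :=
    h _ (exists_ne_zero_and_mul_eq_zero_iff.1 ⟨r, hr0, by rw [mul_comm, ha j]⟩)
  have : (1 : S) ∈ nilradical S := hy ▸ Ideal.sum_mem _ fun j _ ↦ by
    rw [Algebra.smul_def]
    exact Ideal.mul_mem_right _ _ (mem_nilradical.2 ((ha_nil j).map _))
  exact not_isNilpotent_one (mem_nilradical.1 this)

end

/-- For a nontrivial commutative ring `R`, TFAE: (1) every flat ring map out of `R` to a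
nontrivial ring is injective; (2) every zerodivisor of `R` is nilpotent; (3) `R` has a unique
minimal prime `p` and the zerodivisors of `R` are exactly the elements of `p`. -/
theorem stmt4 {R : Type u} [CommRing R] [Nontrivial R] :
    List.TFAE
      [∀ (S : Type u) [CommRing S], Nontrivial S →
          ∀ φ : R →+* S, φ.Flat → Function.Injective φ,
        ∀ r : R, (∃ s : R, s ≠ 0 ∧ r * s = 0) → IsNilpotent r,
        ∃ p : Ideal R, minimalPrimes R = {p} ∧
          ∀ r : R, (∃ s : R, s ≠ 0 ∧ r * s = 0) ↔ r ∈ p] := by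
  simp only [exists_ne_zero_and_mul_eq_zero_iff]
  tfae_have 1 → 2 := fun h r hr ↦ by_contra fun hnil ↦
    haveI := (IsLocalization.Away.nontrivial_iff r (Localization.Away r)).2 hnil
    IsLocalization.Away.not_injective_algebraMap (Localization.Away r) hr <|
      h _ inferInstance _ (RingHom.Flat.holdsForLocalizationAway _ r)
  tfae_have 2 → 1 := fun h S _ _ φ hφ ↦ hφ.injective_of_forall_isNilpotent h
  tfae_have 2 → 3 := fun h ↦
    ⟨nilradical R, Ideal.minimalPrimes_eq_subsingleton (Ideal.isPrimary_bot_iff.2 h),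
      fun r ↦ ⟨fun hr ↦ mem_nilradical.2 (h r hr),
        fun hr ↦ (mem_nilradical.1 hr).notMem_nonZeroDivisors⟩⟩
  tfae_have 3 → 2 := by
    rintro ⟨p, hp, hzd⟩ r hr
    exact mem_nilradical.1 (eq_nilradical_of_minimalPrimes_eq_singleton hp ▸ (hzd r).1 hr)
  tfae_finish
end

section
/- Let R be a nontrivial commutative ring. The following are equivalent: (1) there exist a nontrivial Noetherian commutative ring S and a flat ring homomorphism R → S; (2) there exists a prime ideal p of R such that the localization R_p is Noetherian; (3) there exists a minimal prime p of R such that the localization R_p is Artinian. -/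
/-!
A flat map `R → S` induces, for every prime `m` of `S`, a flat local map `R_{m ∩ R} → S_m`; flat
local maps are faithfully flat, and Noetherianity descends along faithfully flat maps. Conversely,
if `R_p` is Noetherian and `q ⊆ p` is a minimal prime, then `R_q` is a further localization of
`R_p`, hence Noetherian of dimension zero, i.e. Artinian (and in particular Noetherian), and
`R → R_q` is flat.
-/

universe u

theorem IsNoetherianRing.of_faithfullyFlat (A B : Type*) [CommRing A] [CommRing B] [Algebra A B]
    [Module.FaithfullyFlat A B] [IsNoetherianRing B] : IsNoetherianRing A := by
  let extension : Ideal A ↪o Ideal B :=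
    .ofMapLEIff (Ideal.map (algebraMap A B)) fun I J =>
      ⟨fun h => by
        simpa only [Ideal.comap_map_eq_self_of_faithfullyFlat] using
          Ideal.comap_mono (f := algebraMap A B) h,
        Ideal.map_mono⟩
  exact isNoetherian_iff'.mpr extension.wellFoundedGT

theorem RingHom.Flat.isNoetherianRing_localization_comap {R S : Type*} [CommRing R] [CommRing S]
    {f : R →+* S} (hf : f.Flat) (m : Ideal S) [m.IsPrime]
    [IsNoetherianRing (Localization.AtPrime m)] :
    IsNoetherianRing (Localization.AtPrime (m.comap f)) := by
  let g := Localization.localRingHom (m.comap f) m f rfl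
  let : Algebra (Localization.AtPrime (m.comap f)) (Localization.AtPrime m) := g.toAlgebra
  have : Module.Flat _ (Localization.AtPrime m) := hf.localRingHom m (m.comap f) rfl
  have : IsLocalHom (algebraMap _ (Localization.AtPrime m)) :=
    Localization.isLocalHom_localRingHom (m.comap f) m f rfl
  have := Module.FaithfullyFlat.of_flat_of_isLocalHom
    (A := Localization.AtPrime (m.comap f)) (B := Localization.AtPrime m)
  exact .of_faithfullyFlat _ (Localization.AtPrime m)

theorem IsLocalization.isNoetherianRing_of_submonoid_le {R : Type*} [CommRing R]
    {M N : Submonoid R} (h : M ≤ N) (S T : Type*) [CommRing S] [CommRing T] [Algebra R S]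
    [Algebra R T] [IsLocalization M S] [IsLocalization N T] [IsNoetherianRing S] :
    IsNoetherianRing T := by
  let := localizationAlgebraOfSubmonoidLe S T M N h
  have := localization_isScalarTower_of_submonoid_le S T M N h
  have := isLocalization_of_submonoid_le S T M N h
  exact isNoetherianRing (N.map (algebraMap R S)) T ‹_›

theorem isArtinianRing_localization_of_mem_minimalPrimes {R : Type*} [CommRing R]
    {p q : Ideal R} [p.IsPrime] [q.IsPrime] (hq : q ∈ minimalPrimes R) (hqp : q ≤ p)
    [IsNoetherianRing (Localization.AtPrime p)] : IsArtinianRing (Localization.AtPrime q) := by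
  have hcompl : p.primeCompl ≤ q.primeCompl := fun _ hx hxq => hx (hqp hxq)
  have := IsLocalization.isNoetherianRing_of_submonoid_le hcompl
    (Localization.AtPrime p) (Localization.AtPrime q)
  have := Ring.KrullDimLE.of_isLocalization q hq (Localization.AtPrime q)
  exact isArtinianRing_iff_isNoetherianRing_krullDimLE_zero.mpr ⟨‹_›, ‹_›⟩

theorem stmt5_general {R : Type u} [CommRing R] :
    List.TFAE
      [∃ (S : Type u) (_ : CommRing S), Nontrivial S ∧ IsNoetherianRing S ∧
          ∃ φ : R →+* S, φ.Flat,
        ∃ p : PrimeSpectrum R, IsNoetherianRing (Localization.AtPrime p.asIdeal),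
        ∃ p : PrimeSpectrum R, p.asIdeal ∈ minimalPrimes R ∧
          IsArtinianRing (Localization.AtPrime p.asIdeal)] := by
  tfae_have 1 → 2 := by
    rintro ⟨S, _, _, _, φ, hφ⟩
    obtain ⟨m, hm⟩ := Ideal.exists_maximal S
    have := IsLocalization.isNoetherianRing m.primeCompl (Localization.AtPrime m) ‹_›
    exact ⟨⟨m.comap φ, inferInstance⟩, hφ.isNoetherianRing_localization_comap m⟩
  tfae_have 2 → 3 := by
    rintro ⟨p, _⟩
    obtain ⟨q, hq, hqp⟩ := Ideal.exists_minimalPrimes_le (bot_le (a := p.asIdeal))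
    have := hq.1.1
    exact ⟨⟨q, inferInstance⟩, hq, isArtinianRing_localization_of_mem_minimalPrimes hq hqp⟩
  tfae_have 3 → 1 := fun ⟨q, _, _⟩ =>
    ⟨Localization.AtPrime q.asIdeal, inferInstance, inferInstance, inferInstance, _,
      RingHom.flat_algebraMap_iff.mpr inferInstance⟩
  tfae_finish

/-- For a nontrivial commutative ring `R`, TFAE: (1) there is a flat ring map from `R` to a
nontrivial Noetherian ring; (2) some localization `R_p` at a prime is Noetherian; (3) some
localization `R_p` at a minimal prime is Artinian. -/
theorem stmt5 {R : Type u} [CommRing R] [Nontrivial R] :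
    List.TFAE
      [∃ (S : Type u) (_ : CommRing S), Nontrivial S ∧ IsNoetherianRing S ∧
          ∃ φ : R →+* S, φ.Flat,
        ∃ p : PrimeSpectrum R, IsNoetherianRing (Localization.AtPrime p.asIdeal),
        ∃ p : PrimeSpectrum R, p.asIdeal ∈ minimalPrimes R ∧
          IsArtinianRing (Localization.AtPrime p.asIdeal)] :=
  stmt5_general
end

section
/- Let R be a nontrivial commutative ring. If there exist a nontrivial Noetherian ring S and a flat ring homomorphism S → R (i.e. R has property (**)), then the set of integers { char(R_p) | p a minimal prime of R } is finite, where char(R_p) denotes the characteristic of the localization R_p. -/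
/-!
The `ℤ`-torsion of a Noetherian ring `S` has bounded exponent: the kernels of multiplication by
`k !` form an ascending chain of ideals, and once it stabilizes at `k₀` every torsion element is
killed by `N = k₀ !`. By the equational criterion, a relation `n • x = 0` in a flat `S`-module is
a combination of relations `n • a = 0` in `S`, so `N` also kills the torsion of `R`. If `R_p` has
characteristic `c > 0`, then `c • t = 0` for some `t ∉ p`, hence `N • t = 0`, so `N = 0` in `R_p`
and `c ∣ N`. All the characteristics therefore lie in `[0, N]`.
-/

universe u

theorem nsmul_eq_zero_of_dvd {M : Type*} [AddMonoid M] {a b : ℕ} {x : M} (hab : a ∣ b)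
    (hx : a • x = 0) : b • x = 0 := by
  obtain ⟨c, rfl⟩ := hab
  rw [mul_nsmul, hx, nsmul_zero]

open Nat in
theorem IsNoetherian.exists_pos_nsmul_eq_zero_of_nsmul_eq_zero {S M : Type*} [CommRing S]
    [AddCommGroup M] [Module S M] [IsNoetherian S M] :
    ∃ N : ℕ, 0 < N ∧ ∀ (n : ℕ) (x : M), 0 < n → n • x = 0 → N • x = 0 := by
  let kerFactorial : ℕ →o Submodule S M :=
    ⟨fun k ↦ LinearMap.ker (k ! • LinearMap.id), fun k l hkl x (hx : k ! • x = 0) ↦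
      show l ! • x = 0 from nsmul_eq_zero_of_dvd (factorial_dvd_factorial hkl) hx⟩
  obtain ⟨k₀, hk₀⟩ := monotone_stabilizes_iff_noetherian.2 ‹_› kerFactorial
  refine ⟨k₀ !, factorial_pos k₀, fun n x hn hx ↦ ?_⟩
  have hx' : x ∈ kerFactorial (max k₀ n) :=
    show (max k₀ n)! • x = 0 from nsmul_eq_zero_of_dvd (dvd_factorial hn (le_max_right k₀ n)) hx
  rw [← hk₀ _ (le_max_left k₀ n)] at hx'
  exact hx'

theorem Module.Flat.nsmul_eq_zero_of_nsmul_eq_zero {S M : Type*} [CommRing S] [AddCommGroup M]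
    [Module S M] [Module.Flat S M] {n N : ℕ} (hS : ∀ s : S, n • s = 0 → N • s = 0) {x : M}
    (hx : n • x = 0) : N • x = 0 := by
  have hrel : ∑ _i : Unit, (n : S) • x = 0 := by simpa [Nat.cast_smul_eq_nsmul] using hx
  obtain ⟨k, a, y, hxy, hay⟩ := Module.Flat.isTrivialRelation_of_sum_smul_eq_zero hrel
  rw [show x = _ from hxy (), Finset.smul_sum]
  refine Finset.sum_eq_zero fun j _ ↦ ?_
  have hNa : N • a () j = 0 := hS _ (by simpa [nsmul_eq_mul] using hay j)
  rw [← smul_assoc, hNa, zero_smul]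

theorem IsLocalization.ringChar_le {R L : Type*} [CommRing R] [CommRing L] [Algebra R L]
    (M : Submonoid R) [IsLocalization M L] {N : ℕ} (hN : 0 < N)
    (hR : ∀ (n : ℕ) (r : R), 0 < n → n • r = 0 → N • r = 0) : ringChar L ≤ N := by
  rcases Nat.eq_zero_or_pos (ringChar L) with hchar | hchar
  · omega
  obtain ⟨t, ht⟩ := (IsLocalization.map_eq_zero_iff M L (ringChar L : R)).1 (by simp)
  have hNt : (t : R) * N = 0 := by
    rw [mul_comm, ← nsmul_eq_mul]
    exact hR _ _ hchar (by rwa [nsmul_eq_mul, mul_comm])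
  have hNL : (N : L) = 0 := by
    rw [← map_natCast (algebraMap R L)]
    exact (IsLocalization.map_eq_zero_iff M L _).2 ⟨t, hNt⟩
  exact Nat.le_of_dvd hN (ringChar.dvd hNL)

theorem stmt10_general {R : Type u} [CommRing R]
    (h : ∃ (S : Type u) (_ : CommRing S), Nontrivial S ∧ IsNoetherianRing S ∧
        ∃ φ : S →+* R, φ.Flat) :
    {n : ℕ | ∃ p : PrimeSpectrum R, p.asIdeal ∈ minimalPrimes R ∧
      n = ringChar (Localization.AtPrime p.asIdeal)}.Finite := by
  obtain ⟨S, _, -, _, φ, hφ⟩ := h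
  algebraize [φ]
  obtain ⟨N, hN, hS⟩ := IsNoetherian.exists_pos_nsmul_eq_zero_of_nsmul_eq_zero (S := S) (M := S)
  refine (Set.finite_Iic N).subset ?_
  rintro _ ⟨p, -, rfl⟩
  exact IsLocalization.ringChar_le p.asIdeal.primeCompl hN fun n r hn hr ↦
    Module.Flat.nsmul_eq_zero_of_nsmul_eq_zero (hS n · hn) hr

/-- If a nontrivial commutative ring `R` has property (**) (there is a flat ring map to `R`
from a nontrivial Noetherian ring), then the set of characteristics of the localizations of
`R` at its minimal primes is finite. -/
theorem stmt10 {R : Type u} [CommRing R] [Nontrivial R]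
    (h : ∃ (S : Type u) (_ : CommRing S), Nontrivial S ∧ IsNoetherianRing S ∧
        ∃ φ : S →+* R, φ.Flat) :
    {n : ℕ | ∃ p : PrimeSpectrum R, p.asIdeal ∈ minimalPrimes R ∧
      n = ringChar (Localization.AtPrime p.asIdeal)}.Finite :=
  stmt10_general h
end

section
/- Let R₁ := ℤ[t₁, t₂, …]/(t_i t_j : i, j ≥ 1) be the quotient of the polynomial ring over ℤ in countably many variables t₁, t₂, … by the ideal generated by all products t_i t_j. Then R₁ does not have property (*): there is no flat ring homomorphism from R₁ to any nontrivial Noetherian commutative ring. -/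
universe u

/-!
Write `tᵢ` for the image of `Xᵢ`. In a Noetherian ring `S` the chain of ideals
`(φ t₀, …, φ tₙ₋₁)` stabilizes, so some `φ tₙ` is an `S`-combination of the earlier ones. By the
equational criterion, flatness of `φ` lifts this relation to relations `∑ tᵢ bᵢ = 0` in `R₁`, and in
`R₁` every such relation has its coefficients in the square-zero ideal `(t₀, t₁, …)`. This puts the
unit `-1` into the extension of a nil ideal to `S`, which is impossible unless `S = 0`.
-/

theorem IsNoetherianRing.exists_eq_sum_mul {S : Type*} [CommRing S] [IsNoetherianRing S]
    (a : ℕ → S) : ∃ n, ∃ c : Fin n → S, a n = ∑ i, c i * a i := by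
  let N : ℕ →o Ideal S :=
    ⟨fun n => Ideal.span (Set.range fun i : Fin n => a i), fun m n hmn =>
      Ideal.span_mono <| Set.range_subset_iff.2 fun i => ⟨Fin.castLE hmn i, rfl⟩⟩
  obtain ⟨n, hn⟩ := monotone_stabilizes_iff_noetherian.2 ‹IsNoetherianRing S› N
  have : a n ∈ N (n + 1) := Ideal.subset_span ⟨Fin.last n, rfl⟩
  rw [← hn (n + 1) n.le_succ] at this
  obtain ⟨c, hc⟩ := Ideal.mem_span_range_iff_exists_fun.1 this
  exact ⟨n, c, hc.symm⟩

theorem RingHom.Flat.mem_map_of_sum_mul_eq_zero {R S : Type*} [CommRing R] [CommRing S]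
    {φ : R →+* S} (hφ : φ.Flat) {ι : Type*} [Fintype ι] (f : ι → R) (I : Ideal R) (i₀ : ι)
    (hI : ∀ b : ι → R, ∑ i, f i * b i = 0 → b i₀ ∈ I) {x : ι → S}
    (hx : ∑ i, φ (f i) * x i = 0) : x i₀ ∈ I.map φ := by
  algebraize [φ]
  obtain ⟨k, A, y, hxA, hA⟩ := Module.Flat.isTrivialRelation_of_sum_smul_eq_zero (f := f) hx
  rw [hxA i₀]
  exact Ideal.sum_mem _ fun j _ =>
    Ideal.mul_mem_right _ _ (Ideal.mem_map_of_mem φ (hI _ (hA j)))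

theorem Ideal.map_le_nilradical {R S : Type*} [CommRing R] [CommRing S] (φ : R →+* S)
    {I : Ideal R} (hI : I ≤ nilradical R) : I.map φ ≤ nilradical S :=
  Ideal.map_le_iff_le_comap.2 fun _ hx => mem_nilradical.2 ((mem_nilradical.1 (hI hx)).map φ)

theorem not_flat_of_forall_sum_mul_eq_zero {R S : Type*} [CommRing R] [CommRing S]
    [Nontrivial S] [IsNoetherianRing S] (φ : R →+* S) (t : ℕ → R) (I : Ideal R)
    (hI : I ≤ nilradical R)
    (ht : ∀ n (b : Fin (n + 1) → R), ∑ i : Fin (n + 1), t i * b i = 0 → b (Fin.last n) ∈ I) :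
    ¬ φ.Flat := by
  intro hφ
  obtain ⟨n, c, hc⟩ := IsNoetherianRing.exists_eq_sum_mul fun i => φ (t i)
  have hrel : ∑ i : Fin (n + 1), φ (t i) * Fin.snoc (α := fun _ => S) c (-1) i = 0 := by
    simp [Fin.sum_univ_castSucc, hc, mul_comm]
  have hmem := hφ.mem_map_of_sum_mul_eq_zero _ I (Fin.last n) (ht n) hrel
  rw [Fin.snoc_last] at hmem
  have hnil : IsNilpotent (-1 : S) := mem_nilradical.1 (Ideal.map_le_nilradical φ hI hmem)
  exact not_isNilpotent_one (by simpa using hnil.neg)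

namespace MvPolynomial

variable {σ R : Type*} [CommRing R]

theorem mem_idealOfVars_iff {p : MvPolynomial σ R} : p ∈ idealOfVars σ R ↔ coeff 0 p = 0 := by
  rw [← pow_one (idealOfVars σ R), mem_pow_idealOfVars_iff']
  simp [Finsupp.degree_eq_zero_iff]

theorem span_X_mul_X_eq_idealOfVars_sq :
    Ideal.span {f : MvPolynomial σ R | ∃ i j, f = X i * X j} = idealOfVars σ R ^ 2 := by
  rw [sq, Ideal.span_mul_span']
  congr 1
  ext f
  simp [Set.mem_mul, eq_comm]

theorem mem_idealOfVars_of_sum_X_mul_mem_sq {ι : Type*} [Fintype ι] {v : ι → σ}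
    (hv : Function.Injective v) {p : ι → MvPolynomial σ R}
    (h : ∑ i, X (v i) * p i ∈ idealOfVars σ R ^ 2) (j : ι) : p j ∈ idealOfVars σ R := by
  classical
  have hcoeff := (mem_pow_idealOfVars_iff' 2 _).1 h (Finsupp.single (v j) 1) (by simp)
  rw [mem_idealOfVars_iff, ← hcoeff, coeff_sum, Finset.sum_eq_single j]
  · simp [coeff_X_mul']
  · intro i _ hij
    simp [coeff_X_mul', hv.ne hij]
  · simp

theorem not_flat_of_quotient_idealOfVars_sq [Infinite σ] {S : Type*} [CommRing S] [Nontrivial S]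
    [IsNoetherianRing S] (φ : MvPolynomial σ R ⧸ idealOfVars σ R ^ 2 →+* S) : ¬ φ.Flat := by
  let v := Infinite.natEmbedding σ
  refine not_flat_of_forall_sum_mul_eq_zero φ (fun i => Ideal.Quotient.mk _ (X (v i)))
    ((idealOfVars σ R).map (Ideal.Quotient.mk _)) ?_ fun n b hb => ?_
  · intro x hx
    refine mem_nilradical.2 ⟨2, ?_⟩
    have := Ideal.pow_mem_pow hx 2
    rwa [← Ideal.map_pow, Ideal.map_quotient_self, Ideal.mem_bot] at this
  · choose p hp using fun i => Ideal.Quotient.mk_surjective (b i)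
    rw [← hp]
    refine Ideal.mem_map_of_mem _ (mem_idealOfVars_of_sum_X_mul_mem_sq
      (v.injective.comp Fin.val_injective) ?_ _)
    rw [← Ideal.Quotient.eq_zero_iff_mem, ← hb]
    simp [hp]

end MvPolynomial

/-- The ring `R₁ = ℤ[t₁, t₂, …]/(tᵢtⱼ : i, j ≥ 1)` admits no flat ring homomorphism to any
nontrivial Noetherian commutative ring. -/
theorem stmt12 (S : Type u) [CommRing S] [Nontrivial S] [IsNoetherianRing S]
    (φ : (MvPolynomial ℕ ℤ ⧸
        Ideal.span {f : MvPolynomial ℕ ℤ |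
          ∃ i j : ℕ, f = MvPolynomial.X i * MvPolynomial.X j}) →+* S) :
    ¬ φ.Flat := by
  revert φ
  rw [MvPolynomial.span_X_mul_X_eq_idealOfVars_sq]
  exact MvPolynomial.not_flat_of_quotient_idealOfVars_sq
end

section
/- Let R₂ := ℤ[x_p : p prime]/(p·x_p : p prime) be the quotient of the polynomial ring over ℤ in variables x_p indexed by the prime numbers, by the ideal generated by the elements p·x_p for all primes p. Then R₂ does not have property (**): there is no flat ring homomorphism from any nontrivial Noetherian commutative ring to R₂. -/
/-!
Multiplication by a prime `p` is not injective on `R₂`, since it kills `x_p ≠ 0`; flatness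
transports injectivity of `p` on `S` to `R₂`, so every prime is a zero divisor on `S`. But in a
Noetherian module the kernels of multiplication by `n!` stabilise at some `n`, and a prime
`p > n` killing `m` forces `n! • m = 0` with `p` and `n!` coprime, so `m = 0`: only finitely
many primes are zero divisors.
-/

universe u

open MvPolynomial

open Nat in
theorem IsNoetherian.finite_setOf_prime_not_isSMulRegular (R M : Type*) [CommRing R]
    [AddCommGroup M] [Module R M] [IsNoetherian R M] :
    {p : ℕ | p.Prime ∧ ¬ IsSMulRegular M (p : R)}.Finite := by
  let torsionByFactorial : ℕ →o Submodule R M :=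
    ⟨fun n => Submodule.torsionBy R M (n ! : R), fun m n hmn =>
      Submodule.torsionBy_le_torsionBy_of_dvd _ _
        (Nat.cast_dvd_cast (Nat.factorial_dvd_factorial hmn))⟩
  obtain ⟨n, hn⟩ := monotone_stabilizes_iff_noetherian.mpr ‹_› torsionByFactorial
  refine (Set.finite_le_nat n).subset fun p ⟨hp, hreg⟩ => ?_
  show p ≤ n
  by_contra! hnp
  refine hreg (isSMulRegular_iff_right_eq_zero_of_smul.mpr fun m hpm => ?_)
  have hpfac : m ∈ torsionByFactorial p :=
    Submodule.torsionBy_le_torsionBy_of_dvd _ _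
      (Nat.cast_dvd_cast (Nat.dvd_factorial hp.pos le_rfl)) hpm
  have hnfac : (n ! : R) • m = 0 := (hn p hnp.le).ge hpfac
  rw [Nat.cast_smul_eq_nsmul] at hpm hnfac
  rw [← AddMonoid.addOrderOf_eq_one_iff]
  exact Nat.eq_one_of_dvd_coprimes (hp.coprime_iff_not_dvd.mpr (mt hp.dvd_factorial.mp hnp.not_ge))
    (addOrderOf_dvd_of_nsmul_eq_zero hpm) (addOrderOf_dvd_of_nsmul_eq_zero hnfac)

abbrev R₂ : Type := MvPolynomial Nat.Primes ℤ ⧸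
  Ideal.span {f : MvPolynomial Nat.Primes ℤ | ∃ p : Nat.Primes, f = C ((p : ℕ) : ℤ) * X p}

namespace R₂

noncomputable abbrev x (p : Nat.Primes) : R₂ := Ideal.Quotient.mk _ (X p)

theorem natCast_mul_x (p : Nat.Primes) : ((p : ℕ) : R₂) * x p = 0 := by
  rw [← map_natCast (Ideal.Quotient.mk _), ← map_mul, Ideal.Quotient.eq_zero_iff_mem,
    ← map_natCast C]
  exact Ideal.subset_span ⟨p, rfl⟩

theorem x_ne_zero (p : Nat.Primes) : x p ≠ 0 := by
  have : Fact (1 < (p : ℕ)) := ⟨p.2.one_lt⟩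
  -- `x_p ↦ 1`, `x_q ↦ 0` for `q ≠ p` kills every `q * x_q` in characteristic `p`.
  let ψ : MvPolynomial Nat.Primes ℤ →+* ZMod p :=
    eval₂Hom (Int.castRingHom (ZMod p)) (fun q => if q = p then 1 else 0)
  have hker : Ideal.span {f : MvPolynomial Nat.Primes ℤ |
      ∃ q : Nat.Primes, f = C ((q : ℕ) : ℤ) * X q} ≤ RingHom.ker ψ := by
    refine Ideal.span_le.mpr ?_
    rintro _ ⟨q, rfl⟩
    rcases eq_or_ne q p with rfl | hq
    · simp [ψ]
    · simp [ψ, hq]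
  intro h
  simpa [ψ] using hker (Ideal.Quotient.eq_zero_iff_mem.mp h)

theorem not_isSMulRegular_natCast (p : Nat.Primes) : ¬ IsSMulRegular R₂ ((p : ℕ) : R₂) :=
  fun hreg => x_ne_zero p (hreg.right_eq_zero_of_smul (natCast_mul_x p))

end R₂

theorem stmt13_general (S : Type u) [CommRing S] [IsNoetherianRing S]
    (φ : S →+* (MvPolynomial Nat.Primes ℤ ⧸
        Ideal.span {f : MvPolynomial Nat.Primes ℤ |
          ∃ p : Nat.Primes, f = MvPolynomial.C ((p : ℕ) : ℤ) * MvPolynomial.X p})) :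
    ¬ φ.Flat := by
  intro hφ
  algebraize [φ]
  refine Nat.infinite_setOfPred_prime <|
    (IsNoetherian.finite_setOf_prime_not_isSMulRegular S S).subset
      fun p hp => ⟨hp, fun hreg => ?_⟩
  have hregR₂ := hreg.of_flat (S := R₂)
  rw [map_natCast] at hregR₂
  exact R₂.not_isSMulRegular_natCast ⟨p, hp⟩ hregR₂

/-- The ring `R₂ = ℤ[xₚ : p prime]/(p·xₚ : p prime)` admits no flat ring homomorphism from any
nontrivial Noetherian commutative ring. -/
theorem stmt13 (S : Type u) [CommRing S] [Nontrivial S] [IsNoetherianRing S]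
    (φ : S →+* (MvPolynomial Nat.Primes ℤ ⧸
        Ideal.span {f : MvPolynomial Nat.Primes ℤ |
          ∃ p : Nat.Primes, f = MvPolynomial.C ((p : ℕ) : ℤ) * MvPolynomial.X p})) :
    ¬ φ.Flat :=
  stmt13_general S φ
end

section
/- Let R₃ := ℤ[t_i, x_p : i ≥ 1, p prime]/(t_i t_j, p·x_p : i, j ≥ 1, p prime) be the quotient of the polynomial ring over ℤ in variables t₁, t₂, … and x_p (p ranging over prime numbers) by the ideal generated by all products t_i t_j and all elements p·x_p. Then R₃ has neither property (*) nor property (**): there is no flat ring homomorphism from R₃ to any nontrivial Noetherian ring, and no flat ring homomorphism from any nontrivial Noetherian ring to R₃. -/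
universe u

open MvPolynomial in
/-- The ring `R₃ = ℤ[tᵢ, xₚ : i ≥ 1, p prime]/(tᵢtⱼ, p·xₚ)`. -/
abbrev R3 : Type :=
  MvPolynomial (ℕ ⊕ Nat.Primes) ℤ ⧸
    Ideal.span
      ({f : MvPolynomial (ℕ ⊕ Nat.Primes) ℤ |
          ∃ i j : ℕ, f = X (Sum.inl i) * X (Sum.inl j)} ∪
        {f : MvPolynomial (ℕ ⊕ Nat.Primes) ℤ |
          ∃ p : Nat.Primes, f = C ((p : ℕ) : ℤ) * X (Sum.inr p)})

/-!
In a Noetherian ring `S` the ideal generated by the images of the `tᵢ` is finitely generated, so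
some `tₙ` maps into the ideal generated by `t₀, …, tₙ₋₁`. By the equational criterion, flatness
then forces the colon ideal `(t₀, …, tₙ₋₁) : tₙ` of `R₃` to extend to the unit ideal of `S`. But
evaluating `tₙ ↦ ε` in dual numbers shows that this colon ideal lies in the ideal `(tᵢ)`, whose
square is zero, so `S` would be trivial.

For a flat map `S → R₃`, a prime `p` that is a nonzerodivisor on `S` stays one on `R₃`; but
`p · xₚ = 0` with `xₚ ≠ 0`, so every prime number is a zero divisor of `S`. A Noetherian ring has
finitely many associated primes, each containing at most one prime number, so only finitely many
prime numbers are zero divisors of `S`.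
-/

open MvPolynomial Set

theorem IsNoetherianRing.exists_mem_span_range_fin {S : Type*} [CommRing S] [IsNoetherianRing S]
    (g : ℕ → S) : ∃ n, g n ∈ Ideal.span (range fun i : Fin n => g i) := by
  let F : ℕ →o Ideal S := ⟨fun n => Ideal.span (range fun i : Fin n => g i), fun m n hmn =>
    Ideal.span_mono (range_subset_iff.2 fun i => ⟨Fin.castLE hmn i, rfl⟩)⟩
  obtain ⟨n, hn⟩ := monotone_stabilizes_iff_noetherian.2 inferInstance F
  have : g n ∈ F (n + 1) := Ideal.subset_span ⟨Fin.last n, rfl⟩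
  rw [← hn (n + 1) n.le_succ] at this
  exact ⟨n, this⟩

theorem Ideal.map_colon_eq_top_of_flat {R S : Type*} [CommRing R] [CommRing S] [Algebra R S]
    [Module.Flat R S] {ι : Type*} [Fintype ι] (f : ι → R) {r : R}
    (hr : algebraMap R S r ∈ Ideal.span (range (algebraMap R S ∘ f))) :
    ((Ideal.span (range f)).colon {r}).map (algebraMap R S) = ⊤ := by
  obtain ⟨c, hc⟩ := (Submodule.mem_span_range_iff_exists_fun S).1 hr
  have hrel : ∑ o : Option ι, Option.elim o r f • (Option.elim o (-1) c : S) = 0 := by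
    simp only [smul_eq_mul, Function.comp_apply] at hc
    simp only [Fintype.sum_option, Option.elim_none, Option.elim_some, Algebra.smul_def, ← hc,
      mul_comm (c _)]
    ring
  obtain ⟨k, a, y, hx, ha⟩ :=
    Module.Flat.isTrivialRelation_of_sum_smul_eq_zero (R := R) (M := S) hrel
  have hcolon : ∀ j, a none j ∈ (Ideal.span (range f)).colon {r} := by
    intro j
    have hj := ha j
    simp only [Fintype.sum_option, Option.elim_none, Option.elim_some] at hj
    rw [Submodule.mem_colon_singleton, smul_eq_mul, mul_comm, eq_neg_of_add_eq_zero_left hj]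
    exact (Ideal.neg_mem_iff _).2 (Ideal.sum_mem _ fun i _ =>
      Ideal.mul_mem_right _ _ (Ideal.subset_span ⟨i, rfl⟩))
  rw [Ideal.eq_top_iff_one, ← neg_mem_iff, show (-1 : S) = _ from hx none]
  exact Ideal.sum_mem _ fun j _ => by
    rw [Algebra.smul_def]; exact Ideal.mul_mem_right _ _ (Ideal.mem_map_of_mem _ (hcolon j))

theorem Ideal.map_ne_top_of_pow_eq_bot {R S : Type*} [CommRing R] [CommRing S] [Nontrivial S]
    (f : R →+* S) {I : Ideal R} {n : ℕ} (hI : I ^ n = ⊥) : I.map f ≠ ⊤ := by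
  intro h
  have := Ideal.map_pow f I n
  rw [hI, Ideal.map_bot, h, Ideal.top_pow] at this
  exact bot_ne_top this

theorem Ideal.subsingleton_setOf_natCast_prime_mem {S : Type*} [CommRing S] {P : Ideal S}
    (hP : P ≠ ⊤) : {p : Nat.Primes | (p : S) ∈ P}.Subsingleton := by
  intro p hp q hq
  by_contra hpq
  have hcop : IsCoprime (p : ℤ) (q : ℤ) :=
    Nat.isCoprime_iff_coprime.2 ((Nat.coprime_primes p.2 q.2).2 fun h => hpq (Subtype.ext h))
  obtain ⟨u, v, huv⟩ := hcop.map (Int.castRingHom S)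
  refine hP ((Ideal.eq_top_iff_one P).2 ?_)
  rw [← huv]
  simp only [eq_intCast, Int.cast_natCast]
  exact P.add_mem (P.mul_mem_left _ hp) (P.mul_mem_left _ hq)

theorem IsNoetherianRing.finite_setOf_primes_not_isSMulRegular {S : Type*} [CommRing S]
    [IsNoetherianRing S] : {p : Nat.Primes | ¬ IsSMulRegular S (p : S)}.Finite := by
  refine ((associatedPrimes.finite S S).biUnion fun P hP =>
    (Ideal.subsingleton_setOf_natCast_prime_mem hP.isPrime.ne_top).finite).subset fun p hp => ?_
  have : (p : S) ∈ ⋃ P ∈ associatedPrimes S S, (P : Set S) := by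
    rw [biUnion_associatedPrimes_eq_compl_regular]
    exact hp
  obtain ⟨P, hP, hpP⟩ := mem_iUnion₂.1 this
  exact mem_biUnion hP hpP

namespace R3

noncomputable def t (i : ℕ) : R3 := Ideal.Quotient.mk _ (X (Sum.inl i))

noncomputable def x (p : Nat.Primes) : R3 := Ideal.Quotient.mk _ (X (Sum.inr p))

section lift

variable {A : Type*} [CommRing A] (t' : ℕ → A) (x' : Nat.Primes → A)
  (ht' : ∀ i j, t' i * t' j = 0) (hx' : ∀ p : Nat.Primes, (p : A) * x' p = 0)

noncomputable def lift : R3 →+* A :=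
  Ideal.Quotient.lift _ (eval₂Hom (Int.castRingHom A) (Sum.elim t' x')) fun _ ha =>
    (Ideal.span_le (I := RingHom.ker _)).2
      (by rintro _ (⟨i, j, rfl⟩ | ⟨p, rfl⟩) <;> simp [ht', hx']) ha

@[simp]
theorem lift_t (i : ℕ) : lift t' x' ht' hx' (t i) = t' i :=
  (Ideal.Quotient.lift_mk ..).trans (by simp)

@[simp]
theorem lift_x (p : Nat.Primes) : lift t' x' ht' hx' (x p) = x' p :=
  (Ideal.Quotient.lift_mk ..).trans (by simp)

end lift

theorem ringHom_ext {A : Type*} [Semiring A] {f g : R3 →+* A} (ht : ∀ i, f (t i) = g (t i))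
    (hx : ∀ p, f (x p) = g (x p)) : f = g :=
  Ideal.Quotient.ringHom_ext <| MvPolynomial.ringHom_ext' (RingHom.ext_int _ _) (Sum.rec ht hx)

theorem t_mul_t (i j : ℕ) : t i * t j = 0 :=
  Ideal.Quotient.eq_zero_iff_mem.2 (Ideal.subset_span (Or.inl ⟨i, j, rfl⟩))

theorem natCast_mul_x (p : Nat.Primes) : (p : R3) * x p = 0 := by
  rw [← map_natCast (Ideal.Quotient.mk _), ← map_natCast C]
  exact Ideal.Quotient.eq_zero_iff_mem.2 (Ideal.subset_span (Or.inr ⟨p, rfl⟩))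

theorem x_ne_zero (p : Nat.Primes) : x p ≠ 0 := by
  have : Fact (1 < (p : ℕ)) := ⟨p.2.one_lt⟩
  intro h
  have := congrArg (lift (A := ZMod p) 0 (fun q => if q = p then 1 else 0) (by simp)
    (fun q => by split_ifs with hq <;> simp [hq])) h
  simp at this

theorem not_isSMulRegular_natCast (p : Nat.Primes) : ¬ IsSMulRegular R3 (p : R3) := fun h =>
  x_ne_zero p (h (by simp [natCast_mul_x] : (p : R3) • x p = (p : R3) • 0))

noncomputable def tIdeal : Ideal R3 := Ideal.span (range t)

theorem t_mem_tIdeal (i : ℕ) : t i ∈ tIdeal := Ideal.subset_span (mem_range_self i)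

theorem tIdeal_sq : tIdeal ^ 2 = ⊥ := by
  rw [sq, tIdeal, Ideal.span_mul_span', Ideal.span_eq_bot]
  rintro _ ⟨_, ⟨i, rfl⟩, _, ⟨j, rfl⟩, rfl⟩
  exact t_mul_t i j

noncomputable def killT : R3 →+* R3 := lift 0 x (by simp) natCast_mul_x

theorem sub_killT_mem_tIdeal (b : R3) : b - killT b ∈ tIdeal := by
  rw [← Ideal.Quotient.eq_zero_iff_mem, map_sub, sub_eq_zero]
  refine RingHom.congr_fun (ringHom_ext (fun i => ?_) (fun p => ?_)) b
    (g := (Ideal.Quotient.mk tIdeal).comp killT)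
  · simp only [killT, RingHom.coe_comp, Function.comp_apply, lift_t, Pi.zero_apply, map_zero]
    exact Ideal.Quotient.eq_zero_iff_mem.2 (t_mem_tIdeal i)
  · simp [killT]

open DualNumber TrivSqZeroExt

noncomputable def toDualNumber (n : ℕ) : R3 →+* DualNumber R3 :=
  lift (fun i => if i = n then ε else 0) (fun p => inl (x p)) (fun i j => by split_ifs <;> simp)
    (fun p => by rw [← inl_natCast, ← inl_mul, natCast_mul_x, inl_zero])

theorem fst_toDualNumber (n : ℕ) (b : R3) : (toDualNumber n b).fst = killT b := by
  refine RingHom.congr_fun (ringHom_ext (fun i => ?_) (fun p => ?_)) b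
    (f := (fstHom ℤ R3 R3).toRingHom.comp (toDualNumber n))
  · by_cases hi : i = n <;> simp [toDualNumber, killT, hi]
  · simp [toDualNumber, killT]

theorem colon_le_tIdeal (n : ℕ) :
    (Ideal.span (range fun i : Fin n => t i)).colon {t n} ≤ tIdeal := by
  intro b hb
  rw [Submodule.mem_colon_singleton, smul_eq_mul] at hb
  have hker : Ideal.span (range fun i : Fin n => t i) ≤ RingHom.ker (toDualNumber n) := by
    rw [Ideal.span_le]
    rintro _ ⟨i, rfl⟩
    simp [toDualNumber, i.2.ne]
  have h : toDualNumber n b * ε = 0 := by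
    simpa [toDualNumber] using RingHom.mem_ker.1 (hker hb)
  have hkill : killT b = 0 := by
    simpa [DualNumber.snd_mul, fst_toDualNumber] using congrArg snd h
  simpa [hkill] using sub_killT_mem_tIdeal b

end R3

/-- The ring `R₃` has neither property (*) nor property (**): there is no flat ring
homomorphism from `R₃` to any nontrivial Noetherian ring, and no flat ring homomorphism from
any nontrivial Noetherian ring to `R₃`. -/
theorem stmt14 :
    (∀ (S : Type u) [CommRing S], Nontrivial S → IsNoetherianRing S →
        ∀ φ : R3 →+* S, ¬ φ.Flat) ∧
      (∀ (S : Type u) [CommRing S], Nontrivial S → IsNoetherianRing S →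
        ∀ φ : S →+* R3, ¬ φ.Flat) := by
  constructor
  · intro S _ _ _ φ hφ
    algebraize [φ]
    obtain ⟨n, hn⟩ :=
      IsNoetherianRing.exists_mem_span_range_fin fun i => algebraMap R3 S (R3.t i)
    refine Ideal.map_ne_top_of_pow_eq_bot (algebraMap R3 S) R3.tIdeal_sq (top_le_iff.1 ?_)
    rw [← Ideal.map_colon_eq_top_of_flat (fun i : Fin n => R3.t i) hn]
    exact Ideal.map_mono (R3.colon_le_tIdeal n)
  · intro S _ _ _ φ hφ
    algebraize [φ]
    refine infinite_univ (α := Nat.Primes) <|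
      (IsNoetherianRing.finite_setOf_primes_not_isSMulRegular (S := S)).subset fun p _ hreg => ?_
    have := hreg.of_flat (S := R3)
    rw [map_natCast] at this
    exact R3.not_isSMulRegular_natCast p this
end

section
/- Let (R, m) be a square zero extension of ℤ/2ℤ. Then R has property (**) — i.e. there exist a nontrivial Noetherian ring S and a flat ring homomorphism S → R — if and only if the characteristic of R equals 2 or R is Noetherian. -/
/-!
If `2 ≠ 0` in `R`, every element outside `m` is a unit, so `m` is exactly the annihilator of `2`.
A flat map `φ : S → R` carries the annihilator of `2` in `S` onto that of `φ 2 = 2` in `R`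
(flat base change preserves kernels), so `m` is finitely generated when `S` is Noetherian; a
finitely generated square-zero ideal with Noetherian quotient forces `R` to be Noetherian.
Conversely, in characteristic `2` the map `ZMod 2 → R` is flat, being a map out of a field.
-/

universe u

open TensorProduct

namespace Ideal

variable {R : Type*} [CommRing R] {I : Ideal R}

theorem mul_eq_zero_of_sq_eq_bot (hI : I ^ 2 = ⊥) {x y : R} (hx : x ∈ I) (hy : y ∈ I) :
    x * y = 0 := by
  simpa [hI] using (pow_two I ▸ mul_mem_mul hx hy : x * y ∈ I ^ 2)

theorem mem_or_sub_one_mem_of_card_quotient_eq_two (hI : Nat.card (R ⧸ I) = 2) (x : R) :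
    x ∈ I ∨ x - 1 ∈ I := by
  obtain ⟨y, hy0, hy⟩ := (Nat.card_eq_two_iff' (0 : R ⧸ I)).mp hI
  have : Nontrivial (R ⧸ I) := nontrivial_of_ne y 0 hy0
  simp only [← Quotient.eq_zero_iff_mem, map_sub, map_one, sub_eq_zero]
  by_contra! h
  exact h.2 ((hy _ h.1).trans (hy 1 one_ne_zero).symm)

theorem two_mem_of_card_quotient_eq_two (hI : Nat.card (R ⧸ I) = 2) : (2 : R) ∈ I := by
  refine (mem_or_sub_one_mem_of_card_quotient_eq_two hI 2).resolve_right fun h ↦ ?_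
  rw [show (2 : R) - 1 = 1 by norm_num, ← eq_top_iff_one] at h
  subst h
  simp at hI

theorem isUnit_of_notMem_of_card_quotient_eq_two (hsq : I ^ 2 = ⊥)
    (hI : Nat.card (R ⧸ I) = 2) {x : R} (hx : x ∉ I) : IsUnit x := by
  have h := (mem_or_sub_one_mem_of_card_quotient_eq_two hI x).resolve_left hx
  have hnil : IsNilpotent (x - 1) := ⟨2, by rw [pow_two, mul_eq_zero_of_sq_eq_bot hsq h h]⟩
  simpa using hnil.isUnit_add_one

theorem ker_mulLeft_two_eq_of_card_quotient_eq_two (hsq : I ^ 2 = ⊥)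
    (hI : Nat.card (R ⧸ I) = 2) (h2 : (2 : R) ≠ 0) :
    LinearMap.ker (LinearMap.mulLeft R (2 : R)) = I := by
  ext x
  refine ⟨fun hx ↦ ?_,
    fun hx ↦ mul_eq_zero_of_sq_eq_bot hsq (two_mem_of_card_quotient_eq_two hI) hx⟩
  by_contra hxI
  exact h2 ((isUnit_of_notMem_of_card_quotient_eq_two hsq hI hxI).mul_left_eq_zero.mp hx)

end Ideal

theorem RingHom.Flat.map_ker_mulLeft {S R : Type*} [CommRing S] [CommRing R] {φ : S →+* R}
    (hφ : φ.Flat) (s : S) :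
    Ideal.map φ (LinearMap.ker (LinearMap.mulLeft S s)) =
      LinearMap.ker (LinearMap.mulLeft R (φ s)) := by
  let := φ.toAlgebra
  have : Module.Flat S R := hφ
  set I : Ideal S := LinearMap.ker (LinearMap.mulLeft S s)
  refine le_antisymm (Ideal.map_le_iff_le_comap.mpr fun a ha ↦ ?_) fun x hx ↦ ?_
  · simpa [I, ← map_mul] using congrArg φ ha
  · have hexact := Module.Flat.rTensor_exact R (LinearMap.exact_subtype_ker_map
      (LinearMap.mulLeft S s))
    have hmul : (LinearMap.mulLeft S s).rTensor R ((1 : S) ⊗ₜ[S] x) = 0 := by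
      apply (TensorProduct.lid S R).injective
      simpa [Algebra.smul_def, RingHom.algebraMap_toAlgebra] using hx
    obtain ⟨z, hz⟩ := (hexact _).mp hmul
    suffices TensorProduct.lid S R (I.subtype.rTensor R z) ∈ I.map φ by
      rwa [hz, TensorProduct.lid_tmul, one_smul] at this
    clear hz
    induction z using TensorProduct.induction_on with
    | zero => simp
    | tmul a r =>
      simpa [Algebra.smul_def, RingHom.algebraMap_toAlgebra] using
        Ideal.mul_mem_right r _ (Ideal.mem_map_of_mem φ a.2)
    | add z₁ z₂ h₁ h₂ => simpa only [map_add] using add_mem h₁ h₂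

theorem isNoetherian_of_isNoetherian_quotient {R M : Type*} [CommRing R] [AddCommGroup M]
    [Module R M] (I : Ideal R) [Module (R ⧸ I) M] [IsScalarTower R (R ⧸ I) M]
    [IsNoetherian (R ⧸ I) M] : IsNoetherian R M :=
  (LinearMap.isNoetherian_iff_of_bijective (σ := Ideal.Quotient.mk I)
    { toFun := id, map_add' := fun _ _ ↦ rfl
      map_smul' := fun r x ↦ (algebraMap_smul (R ⧸ I) r x).symm }
    Function.bijective_id).mpr inferInstance

theorem isNoetherianRing_of_fg_of_sq_eq_bot {R : Type*} [CommRing R] (I : Ideal R) (hI : I.FG)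
    (hsq : I ^ 2 = ⊥) [IsNoetherianRing (R ⧸ I)] : IsNoetherianRing R := by
  let := Module.IsTorsionBySet.module (R := R) (M := I) (I := I) fun x a ↦
    Subtype.ext (Ideal.mul_eq_zero_of_sq_eq_bot hsq a.2 x.2)
  have : Module.Finite R I := Module.Finite.iff_fg.mpr hI
  have : Module.Finite (R ⧸ I) I := Module.Finite.of_restrictScalars_finite R _ _
  have : IsNoetherian R I := isNoetherian_of_isNoetherian_quotient I
  have : IsNoetherian R (R ⧸ I) := isNoetherian_of_isNoetherian_quotient I
  exact (isNoetherian_iff_submodule_quotient I).mpr ⟨inferInstance, inferInstance⟩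

/-- Let `(R, m)` be a square zero extension of `ℤ/2ℤ`, i.e. `m² = 0` and `R/m` has exactly
two elements. Then `R` has property (**) — there exist a nontrivial Noetherian ring `S` and a
flat ring homomorphism `S → R` — iff `char R = 2` or `R` is Noetherian. -/
theorem stmt19 {R : Type u} [CommRing R] [Nontrivial R] (m : Ideal R)
    (hm2 : m ^ 2 = ⊥) (hcard : Nat.card (R ⧸ m) = 2) :
    (∃ (S : Type u) (_ : CommRing S), Nontrivial S ∧ IsNoetherianRing S ∧
        ∃ φ : S →+* R, φ.Flat) ↔
      ringChar R = 2 ∨ IsNoetherianRing R := by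
  constructor
  · rintro ⟨S, _, -, hS, φ, hφ⟩
    by_cases h2 : (2 : R) = 0
    · have := CharTwo.of_one_ne_zero_of_two_eq_zero one_ne_zero h2
      exact Or.inl (ringChar.eq R 2)
    · have : Finite (R ⧸ m) := Nat.finite_of_card_ne_zero (by omega)
      refine Or.inr (isNoetherianRing_of_fg_of_sq_eq_bot m ?_ hm2)
      rw [← Ideal.ker_mulLeft_two_eq_of_card_quotient_eq_two hm2 hcard h2, ← map_ofNat φ 2,
        ← RingHom.Flat.map_ker_mulLeft hφ]
      exact Ideal.FG.map (IsNoetherian.noetherian _) φ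
  · rintro (hchar | hR)
    · have := ringChar.of_eq hchar
      let φ : ULift.{u} (ZMod 2) →+* R := (ZMod.castHom dvd_rfl R).comp ULift.ringEquiv.toRingHom
      exact ⟨ULift (ZMod 2), inferInstance, inferInstance, inferInstance, φ,
        .of_isField (Field.toIsField _) φ⟩
    · exact ⟨R, inferInstance, inferInstance, hR, RingHom.id R, .id R⟩
end
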